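/- arXiv:1212.0935 — 2 statements merged into one kernel-verified Lean document; each statement's English description precedes it below -/
import Mathlib

section
/- Let G = (V, E) be a finite directed acyclic graph satisfying the ant-conservation condition, let G' be the graph obtained by the tail construction, and let the weights w_e^i be defined from chosen paths R_i from s_i' to t_i'. If P is a directed path in G' from s_i' to t_j' with j ≠ i, then Σ_{e ∈ P} w_e^i ≤ |V|. -/
/-! Common setup: finite directed graphs as finsets of ordered pairs of vertices. -/

/-- The list of edges of a path given as a list of vertices. -/
def pathEdges {V : Type} (p : List V) : List (V × V) := p.zip p.tail

/-- `p` is a directed path in the graph with edge set `E`: a nonempty sequence of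
pairwise-distinct vertices in which consecutive vertices are joined by edges of `E`. -/
def IsPath {V : Type} [DecidableEq V] (E : Finset (V × V)) (p : List V) : Prop :=
  p ≠ [] ∧ p.Nodup ∧ p.Chain' (fun u v => (u, v) ∈ E)

/-- `p` is a directed path in `E` from `a` to `b`. -/
def IsPathFrom {V : Type} [DecidableEq V] (E : Finset (V × V)) (p : List V) (a b : V) : Prop :=
  IsPath E p ∧ p.head? = some a ∧ p.getLast? = some b

/-- The indegree of vertex `v`. -/
def indeg {V : Type} [DecidableEq V] (E : Finset (V × V)) (v : V) : ℕ :=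
  (E.filter (fun e => e.2 = v)).card

/-- The outdegree of vertex `v`. -/
def outdeg {V : Type} [DecidableEq V] (E : Finset (V × V)) (v : V) : ℕ :=
  (E.filter (fun e => e.1 = v)).card

/-- A directed cycle: a sequence `v₀, v₁, …, v_ℓ = v₀` with `ℓ ≥ 1` and all
`(v_j, v_{j+1})` edges. -/
def IsCycle {V : Type} [DecidableEq V] (E : Finset (V × V)) (p : List V) : Prop :=
  2 ≤ p.length ∧ p.Chain' (fun u v => (u, v) ∈ E) ∧ p.head? = p.getLast?

/-- The graph is acyclic: it contains no directed cycle. -/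
def Acyclic {V : Type} [DecidableEq V] (E : Finset (V × V)) : Prop :=
  ∀ p : List V, ¬ IsCycle E p

/-- The ant-conservation condition for a directed graph with edge set `E`, with `k`
distinguished sources `s 1, …, s k` (exactly the vertices of indegree 0) and `k`
distinguished destinations `t 1, …, t k` (exactly the vertices of outdegree 0):
`Σᵢ outdeg (s i) = Σᵢ indeg (t i) = k`, and `indeg v = outdeg v` for every
intermediate vertex `v`. -/
structure AntConservation {V : Type} [DecidableEq V]
    (E : Finset (V × V)) (k : ℕ) (s t : Fin k → V) : Prop where
  s_inj : Function.Injective s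
  t_inj : Function.Injective t
  sources : ∀ v, indeg E v = 0 ↔ ∃ i, s i = v
  dests : ∀ v, outdeg E v = 0 ↔ ∃ i, t i = v
  out_sum : ∑ i, outdeg E (s i) = k
  in_sum : ∑ i, indeg E (t i) = k
  conserve : ∀ v, (¬ ∃ i, s i = v) → (¬ ∃ i, t i = v) → indeg E v = outdeg E v

/-- The paths `P 1, …, P k` are pairwise edge-disjoint. -/
def EdgeDisjoint {V : Type} {k : ℕ} (P : Fin k → List V) : Prop :=
  ∀ i j, i ≠ j → ∀ e, e ∈ pathEdges (P i) → e ∉ pathEdges (P j)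

/-- The total weight of the edges of a path under an edge-weight function. -/
def listWeight {V : Type} (wt : V × V → ℕ) (p : List V) : ℕ :=
  ((pathEdges p).map wt).sum

/-! ### The tail construction
`G'` lives on the vertex type `V ⊕ Fin k ⊕ (Fin k × Fin (k * |V|))`, where `Sum.inl v`
is an original vertex, `Sum.inr (Sum.inl i)` is the new source `sᵢ'`, and
`Sum.inr (Sum.inr (i, m))` is the `(m+1)`-st vertex `t_{i,m+1}` of the `i`-th tail
(so `tᵢ' = t_{i,k|V|}` is the tail vertex with index `m = k * |V| - 1`). -/

/-- Adjacency of the tail-construction graph `G'`: the edges of `G`, an edge `(sᵢ', sᵢ)`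
for each `i`, an edge from `tᵢ` to the first vertex of the `i`-th tail, and the edges
along each tail path. -/
def tailAdj {V : Type} [Fintype V] [DecidableEq V] {k : ℕ} (E : Finset (V × V))
    (s t : Fin k → V)
    (e : (V ⊕ Fin k ⊕ Fin k × Fin (k * Fintype.card V)) ×
         (V ⊕ Fin k ⊕ Fin k × Fin (k * Fintype.card V))) : Bool :=
  match e with
  | (Sum.inl u, Sum.inl v) => decide ((u, v) ∈ E)
  | (Sum.inr (Sum.inl i), Sum.inl v) => decide (v = s i)
  | (Sum.inl u, Sum.inr (Sum.inr (i, m))) => decide (u = t i) && decide ((m : ℕ) = 0)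
  | (Sum.inr (Sum.inr (i, m)), Sum.inr (Sum.inr (j, m'))) =>
      decide (i = j) && decide ((m' : ℕ) = (m : ℕ) + 1)
  | _ => false

/-- The edge set of the tail-construction graph `G'`. -/
def tailEdges {V : Type} [Fintype V] [DecidableEq V] {k : ℕ} (E : Finset (V × V))
    (s t : Fin k → V) :
    Finset ((V ⊕ Fin k ⊕ Fin k × Fin (k * Fintype.card V)) ×
            (V ⊕ Fin k ⊕ Fin k × Fin (k * Fintype.card V))) :=
  Finset.univ.filter (fun e => tailAdj E s t e = true)

/-- `z` is the last vertex `tᵢ' = t_{i, k|V|}` of the `i`-th tail. -/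
def IsLastTail {V : Type} [Fintype V] {k : ℕ} (i : Fin k)
    (z : V ⊕ Fin k ⊕ Fin k × Fin (k * Fintype.card V)) : Prop :=
  ∃ m : Fin (k * Fintype.card V), (m : ℕ) + 1 = k * Fintype.card V ∧
    z = Sum.inr (Sum.inr (i, m))

/-! The `wⁱ`-weight of `P` is the number of edges `P` shares with `Rᵢ`. The head of a shared
edge lies on both paths. It is not a new source `sₗ'`, which has no incoming edges, and not a
tail vertex: tails cannot be left, so a tail vertex on `P` lies in the `j`-th tail and one on
`Rᵢ` in the `i`-th. So the heads are vertices of `G`, pairwise distinct because `P` repeats no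
vertex, and there are at most `|V|` of them. -/

theorem snd_mem_of_mem_pathEdges {α : Type} {l : List α} {e : α × α}
    (he : e ∈ pathEdges l) : e.2 ∈ l :=
  List.mem_of_mem_tail (List.of_mem_zip he).2

theorem List.IsChain.rel_of_mem_pathEdges {α : Type} {r : α → α → Prop} {l : List α}
    (hl : l.IsChain r) {e : α × α} (he : e ∈ pathEdges l) : r e.1 e.2 := by
  induction l using List.twoStepInduction with
  | nil | singleton => simp [pathEdges] at he
  | cons_cons a b l _ ih =>
    rw [List.isChain_cons_cons] at hl
    rcases List.mem_cons.1 he with rfl | he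
    · exact hl.1
    · exact ih b hl.2 he

theorem listWeight_eq_countP {α : Type} [DecidableEq α] {wt : α × α → ℕ}
    {L : List (α × α)} (hwt : ∀ e, (e ∈ L → wt e = 1) ∧ (e ∉ L → wt e = 0)) (p : List α) :
    listWeight wt p = (pathEdges p).countP (· ∈ L) := by
  unfold listWeight
  induction pathEdges p with
  | nil => rfl
  | cons e l ih =>
    by_cases he : e ∈ L <;> simp [he, (hwt e).1, (hwt e).2, ih, add_comm]

/-- The heads of the edges of a path without repeated vertices are distinct. -/
theorem countP_pathEdges_le_card {α β : Type} [Fintype β] [DecidableEq α] {f : β → α}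
    (hf : f.Injective) {p : List α} (hp : p.Nodup) {q : α × α → Bool}
    (hq : ∀ e ∈ pathEdges p, q e → e.2 ∈ Set.range f) :
    (pathEdges p).countP q ≤ Fintype.card β := by
  set heads := ((pathEdges p).filter q).map Prod.snd
  have hnodup : heads.Nodup := by
    refine (List.filter_sublist.map Prod.snd).nodup ?_
    rw [pathEdges, List.map_snd_zip (by cases p <;> simp)]
    exact hp.sublist (List.tail_sublist p)
  have hsub : heads.toFinset ⊆ Finset.univ.image f := by
    intro z hz
    obtain ⟨e, he, rfl⟩ := List.mem_map.1 (List.mem_toFinset.1 hz)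
    obtain ⟨heP, heq⟩ := List.mem_filter.1 he
    obtain ⟨b, hb⟩ := hq e heP heq
    exact Finset.mem_image.2 ⟨b, Finset.mem_univ b, hb⟩
  calc (pathEdges p).countP q = heads.toFinset.card := by
        rw [List.toFinset_card_of_nodup hnodup, List.length_map, List.countP_eq_length_filter]
    _ ≤ (Finset.univ.image f).card := Finset.card_le_card hsub
    _ = Fintype.card β := by rw [Finset.card_image_of_injective _ hf, Finset.card_univ]

abbrev TailVertex (V : Type) [Fintype V] (k : ℕ) : Type :=
  V ⊕ Fin k ⊕ Fin k × Fin (k * Fintype.card V)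

section TailConstruction

variable {V : Type} [Fintype V] {k : ℕ}

def InTail (j : Fin k) (z : TailVertex V k) : Prop :=
  ∃ m, z = Sum.inr (Sum.inr (j, m))

theorem InTail.eq {i j : Fin k} {z : TailVertex V k} (hi : InTail i z) (hj : InTail j z) :
    i = j := by
  obtain ⟨m, rfl⟩ := hi
  obtain ⟨m', hm'⟩ := hj
  simp only [Sum.inr.injEq, Prod.mk.injEq] at hm'
  exact hm'.1

theorem IsLastTail.inTail {j : Fin k} {z : TailVertex V k} (h : IsLastTail j z) : InTail j z :=
  let ⟨m, _, hz⟩ := h; ⟨m, hz⟩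

variable [DecidableEq V] {E : Finset (V × V)} {s t : Fin k → V}

theorem InTail.of_mem_tailEdges {j : Fin k} {u v : TailVertex V k} (hu : InTail j u)
    (huv : (u, v) ∈ tailEdges E s t) : InTail j v := by
  obtain ⟨m, rfl⟩ := hu
  simp only [tailEdges, Finset.mem_filter, Finset.mem_univ, true_and] at huv
  rcases v with v | i | ⟨j', m'⟩ <;> simp only [tailAdj, Bool.and_eq_true, decide_eq_true_eq,
    Bool.false_eq_true] at huv
  exact ⟨m', by rw [huv.1]⟩

theorem not_mem_tailEdges_source (u : TailVertex V k) (i : Fin k) :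
    (u, Sum.inr (Sum.inl i)) ∉ tailEdges E s t := by
  simp only [tailEdges, Finset.mem_filter, Finset.mem_univ, true_and]
  rcases u with u | i' | ⟨j, m⟩ <;> simp [tailAdj]

theorem InTail.of_mem_of_getLast? {l : List (TailVertex V k)}
    (hl : l.IsChain (fun u v => (u, v) ∈ tailEdges E s t)) {j : Fin k} {z a : TailVertex V k}
    (hz : z ∈ l) (hzj : InTail j z) (ha : l.getLast? = some a) : InTail j a := by
  obtain ⟨l₁, l₂, rfl⟩ := List.append_of_mem hz
  rw [List.getLast?_append_of_ne_nil _ (List.cons_ne_nil z l₂)] at ha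
  exact (hl.suffix ⟨l₁, rfl⟩).induction (InTail j) _
    (fun _ _ huv hx => hx.of_mem_tailEdges huv) (fun _ => hzj) a (List.mem_of_mem_getLast? ha)

theorem snd_mem_range_inl_of_mem_pathEdges {P R : List (TailVertex V k)}
    (hP : P.IsChain (fun u v => (u, v) ∈ tailEdges E s t))
    (hR : R.IsChain (fun u v => (u, v) ∈ tailEdges E s t)) {i j : Fin k} (hij : j ≠ i)
    {a b : TailVertex V k} (hPa : P.getLast? = some a) (ha : InTail j a)
    (hRb : R.getLast? = some b) (hb : InTail i b)
    {e : TailVertex V k × TailVertex V k} (heP : e ∈ pathEdges P) (heR : e ∈ pathEdges R) :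
    e.2 ∈ Set.range Sum.inl := by
  obtain ⟨x, y⟩ := e
  rcases y with v | i' | ⟨j', m⟩
  · exact ⟨v, rfl⟩
  · exact absurd (hP.rel_of_mem_pathEdges heP) (not_mem_tailEdges_source x i')
  · have hy : InTail j' (Sum.inr (Sum.inr (j', m)) : TailVertex V k) := ⟨m, rfl⟩
    have hj := (hy.of_mem_of_getLast? hP (snd_mem_of_mem_pathEdges heP) hPa).eq ha
    have hi := (hy.of_mem_of_getLast? hR (snd_mem_of_mem_pathEdges heR) hRb).eq hb
    exact absurd (hj.symm.trans hi) hij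

end TailConstruction

theorem stmt7_general {V : Type} [Fintype V] [DecidableEq V] (E : Finset (V × V)) (k : ℕ)
    (s t : Fin k → V)
    (t' : Fin k → V ⊕ Fin k ⊕ Fin k × Fin (k * Fintype.card V))
    (ht' : ∀ i, IsLastTail i (t' i))
    (R : Fin k → List (V ⊕ Fin k ⊕ Fin k × Fin (k * Fintype.card V)))
    (hR : ∀ i, IsPathFrom (tailEdges E s t) (R i) (Sum.inr (Sum.inl i)) (t' i))
    (w : Fin k → (V ⊕ Fin k ⊕ Fin k × Fin (k * Fintype.card V)) ×
                 (V ⊕ Fin k ⊕ Fin k × Fin (k * Fintype.card V)) → ℕ)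
    (hw : ∀ i e, (e ∈ pathEdges (R i) → w i e = 1) ∧ (e ∉ pathEdges (R i) → w i e = 0))
    (i j : Fin k) (hij : j ≠ i)
    (P : List (V ⊕ Fin k ⊕ Fin k × Fin (k * Fintype.card V)))
    (hP : IsPathFrom (tailEdges E s t) P (Sum.inr (Sum.inl i)) (t' j)) :
    listWeight (w i) P ≤ Fintype.card V := by
  obtain ⟨⟨-, hPnodup, hPchain⟩, -, hPlast⟩ := hP
  obtain ⟨⟨-, -, hRchain⟩, -, hRlast⟩ := hR i
  rw [listWeight_eq_countP (hw i)]
  refine countP_pathEdges_le_card Sum.inl_injective hPnodup fun e heP heR => ?_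
  exact snd_mem_range_inl_of_mem_pathEdges hPchain hRchain hij hPlast (ht' j).inTail
    hRlast (ht' i).inTail heP (by simpa using heR)

/-- In the tail-construction graph `G'` with indicator weights coming
from chosen paths `Rᵢ` from `sᵢ'` to `tᵢ'`, any directed path from `sᵢ'` to `tⱼ'` with
`j ≠ i` has `wⁱ`-weight at most `|V|`. -/
theorem stmt7 {V : Type} [Fintype V] [DecidableEq V] (E : Finset (V × V)) (k : ℕ)
    (s t : Fin k → V) (hacyc : Acyclic E) (hac : AntConservation E k s t)
    (t' : Fin k → V ⊕ Fin k ⊕ Fin k × Fin (k * Fintype.card V))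
    (ht' : ∀ i, IsLastTail i (t' i))
    (R : Fin k → List (V ⊕ Fin k ⊕ Fin k × Fin (k * Fintype.card V)))
    (hR : ∀ i, IsPathFrom (tailEdges E s t) (R i) (Sum.inr (Sum.inl i)) (t' i))
    (w : Fin k → (V ⊕ Fin k ⊕ Fin k × Fin (k * Fintype.card V)) ×
                 (V ⊕ Fin k ⊕ Fin k × Fin (k * Fintype.card V)) → ℕ)
    (hw : ∀ i e, (e ∈ pathEdges (R i) → w i e = 1) ∧ (e ∉ pathEdges (R i) → w i e = 0))
    (i j : Fin k) (hij : j ≠ i)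
    (P : List (V ⊕ Fin k ⊕ Fin k × Fin (k * Fintype.card V)))
    (hP : IsPathFrom (tailEdges E s t) P (Sum.inr (Sum.inl i)) (t' j)) :
    listWeight (w i) P ≤ Fintype.card V :=
  stmt7_general E k s t t' ht' R hR w hw i j hij P hP
end

section
/- Let G be a finite directed acyclic graph with a distinguished vertex t and nonnegative integer weights w_e^i for each edge e and each 1 ≤ i ≤ k. Let u ≠ t be a vertex with outdegree d ≥ 1 and out-edges e_1 = (u, a_1), …, e_d = (u, a_d), and let v_{d+1}, …, v_k be vertices from none of which u is reachable by a directed path. Then F(u, …, u, v_{d+1}, …, v_k) (with u repeated d times) equals the maximum over all permutations π of {1, …, d} of [ Σ_{j=1}^d w_{e_{π(j)}}^j + F(a_{π(1)}, …, a_{π(d)}, v_{d+1}, …, v_k) ]. -/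
/-- `FVal E w t v` is the supremum, in `ℕ ∪ {−∞}`, of the weights
`Σᵢ Σ_{e ∈ Pᵢ} w i e` over all feasible families for the tuple `v`, i.e. families
`P₁, …, P_k` of pairwise edge-disjoint directed paths with `Pᵢ` from `v i` to `t`;
it is `⊥ = −∞` if no feasible family exists. -/
noncomputable def FVal {V : Type} [DecidableEq V] {k : ℕ} (E : Finset (V × V))
    (w : Fin k → V × V → ℕ) (t : V) (v : Fin k → V) : WithBot ℕ :=
  sSup {c : WithBot ℕ | ∃ P : Fin k → List V,
    (∀ i, IsPathFrom E (P i) (v i) t) ∧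
    EdgeDisjoint P ∧
    c = (∑ i, listWeight (w i) (P i) : ℕ)}

/-! Since `u ≠ t`, each of the first `d` paths of a feasible family for `(u, …, u, vtail)` leaves
`u` along an out-edge, and edge-disjointness makes these `d` edges distinct, so they are the
out-edges `(u, a (π j))` for a permutation `π`; removing them leaves a feasible family for
`(a ∘ π, vtail)` whose weight is smaller by `Σⱼ wʲ (u, a (π j))`. Conversely, acyclicity and the
unreachability of `u` from `vtail` keep `u` off every path of a feasible family for
`(a ∘ π, vtail)`, so prepending `u` to its first `d` paths gives a feasible family for
`(u, …, u, vtail)`. -/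

open Finset Function

section Paths

variable {V : Type}

lemma pathEdges_cons_of_head? {u x : V} {p : List V} (hp : p.head? = some x) :
    pathEdges (u :: p) = (u, x) :: pathEdges p := by
  cases p with
  | nil => simp at hp
  | cons y p => simp_all [pathEdges]

lemma listWeight_cons_of_head? (wt : V × V → ℕ) {u x : V} {p : List V} (hp : p.head? = some x) :
    listWeight wt (u :: p) = wt (u, x) + listWeight wt p := by
  simp [listWeight, pathEdges_cons_of_head? hp]

lemma fst_mem_of_mem_pathEdges {p : List V} {e : V × V} (he : e ∈ pathEdges p) : e.1 ∈ p :=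
  (List.of_mem_zip he).1

lemma nodup_pathEdges {p : List V} (hp : p.Nodup) : (pathEdges p).Nodup := by
  induction p with
  | nil => simp [pathEdges]
  | cons x p ih =>
    cases p with
    | nil => simp [pathEdges]
    | cons y p =>
      obtain ⟨hx, hp⟩ := List.nodup_cons.mp hp
      rw [pathEdges_cons_of_head? rfl]
      exact List.nodup_cons.mpr ⟨fun h => hx (fst_mem_of_mem_pathEdges h), ih hp⟩

lemma rel_of_mem_pathEdges {R : V → V → Prop} {p : List V} (hp : p.IsChain R) {e : V × V}
    (he : e ∈ pathEdges p) : R e.1 e.2 := by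
  induction p with
  | nil => simp [pathEdges] at he
  | cons x p ih =>
    cases p with
    | nil => simp [pathEdges] at he
    | cons y p =>
      obtain ⟨hxy, hp⟩ := List.isChain_cons_cons.mp hp
      rw [pathEdges_cons_of_head? rfl, List.mem_cons] at he
      rcases he with rfl | he
      exacts [hxy, ih hp he]

lemma isChain_cons_of_head? {R : V → V → Prop} {u x : V} {p : List V} (hux : R u x)
    (hx : p.head? = some x) (hp : p.IsChain R) : (u :: p).IsChain R :=
  List.isChain_cons.mpr ⟨by simpa [hx] using hux, hp⟩

variable {E : Finset (V × V)}

variable [DecidableEq V]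

lemma IsPath.listWeight_le {p : List V} (hp : IsPath E p) (wt : V × V → ℕ) :
    listWeight wt p ≤ ∑ e ∈ E, wt e := by
  rw [listWeight, ← List.sum_toFinset _ (nodup_pathEdges hp.2.1)]
  exact sum_le_sum_of_subset fun e he => rel_of_mem_pathEdges hp.2.2 (List.mem_toFinset.mp he)

lemma IsPathFrom.cons {p : List V} {u x b : V} (hux : (u, x) ∈ E) (hp : IsPathFrom E p x b)
    (hu : u ∉ p) : IsPathFrom E (u :: p) u b := by
  obtain ⟨⟨hne, hnd, hc⟩, hx, hb⟩ := hp
  refine ⟨⟨List.cons_ne_nil _ _, List.nodup_cons.mpr ⟨hu, hnd⟩,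
    isChain_cons_of_head? hux hx hc⟩, rfl, ?_⟩
  obtain ⟨y, p, rfl⟩ := List.exists_cons_of_ne_nil hne
  rwa [List.getLast?_cons_cons]

lemma IsPathFrom.exists_eq_cons {p : List V} {u b : V} (hp : IsPathFrom E p u b) (hub : u ≠ b) :
    ∃ x r, p = u :: r ∧ (u, x) ∈ E ∧ IsPathFrom E r x b := by
  obtain ⟨⟨hne, hnd, hc⟩, hu, hb⟩ := hp
  match p, hu, hb with
  | [_], rfl, hb => exact absurd (by simpa using hb) hub
  | _ :: x :: r, rfl, hb =>
    obtain ⟨hux, hc⟩ := List.isChain_cons_cons.mp hc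
    exact ⟨x, x :: r, rfl, hux, ⟨List.cons_ne_nil _ _, (List.nodup_cons.mp hnd).2, hc⟩, rfl,
      by rwa [List.getLast?_cons_cons] at hb⟩

lemma IsPathFrom.exists_prefix {p : List V} {a b x : V} (hp : IsPathFrom E p a b) (hx : x ∈ p) :
    ∃ q, IsPathFrom E q a x := by
  obtain ⟨⟨-, hnd, hc⟩, ha, -⟩ := hp
  obtain ⟨s, r, rfl⟩ := List.append_of_mem hx
  refine ⟨s ++ [x], ⟨⟨by simp, hnd.sublist (by simp), hc.prefix ⟨r, by simp⟩⟩, ?_, by simp⟩⟩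
  cases s <;> simpa using ha

lemma Acyclic.notMem_of_isPathFrom (hE : Acyclic E) {p : List V} {u x b : V}
    (hux : (u, x) ∈ E) (hp : IsPathFrom E p x b) : u ∉ p := by
  intro hu
  obtain ⟨q, ⟨hne, -, hc⟩, hx, hq⟩ := hp.exists_prefix hu
  refine hE (u :: q)
    ⟨Nat.succ_le_succ (List.length_pos_iff.mpr hne), isChain_cons_of_head? hux hx hc, ?_⟩
  rw [List.head?_cons, List.getLast?_cons, hq, Option.getD_some]

lemma exists_eq_of_outdeg_eq {u x : V} {d : ℕ} {a : Fin d → V} (ha : Injective a)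
    (haE : ∀ j, (u, a j) ∈ E) (hdeg : outdeg E u = d) (hx : (u, x) ∈ E) : ∃ j, a j = x := by
  have hinj : Injective fun j => (u, a j) := fun i j h => ha (congrArg Prod.snd h)
  have himage : univ.image (fun j => (u, a j)) = E.filter (fun e => e.1 = u) :=
    eq_of_subset_of_card_le (fun e he => by obtain ⟨j, -, rfl⟩ := mem_image.mp he; simp [haE j])
      (by rw [card_image_of_injective _ hinj, card_univ, Fintype.card_fin, ← hdeg, outdeg])
  obtain ⟨j, -, hj⟩ := mem_image.mp (himage ▸ mem_filter.mpr ⟨hx, rfl⟩ :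
    (u, x) ∈ univ.image (fun j => (u, a j)))
  exact ⟨j, congrArg Prod.snd hj⟩

end Paths

section Families

variable {V : Type} {k : ℕ}

def familyWeight (w : Fin k → V × V → ℕ) (P : Fin k → List V) : ℕ :=
  ∑ i, listWeight (w i) (P i)

variable [DecidableEq V]

def IsFeasible (E : Finset (V × V)) (t : V) (v : Fin k → V) (P : Fin k → List V) : Prop :=
  (∀ i, IsPathFrom E (P i) (v i) t) ∧ EdgeDisjoint P

def feasibleWeights (E : Finset (V × V)) (w : Fin k → V × V → ℕ) (t : V) (v : Fin k → V) :
    Set (WithBot ℕ) :=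
  {c | ∃ P : Fin k → List V, (∀ i, IsPathFrom E (P i) (v i) t) ∧ EdgeDisjoint P ∧
    c = (familyWeight w P : ℕ)}

variable {E : Finset (V × V)} {t : V} {w : Fin k → V × V → ℕ} {v : Fin k → V}

lemma bddAbove_feasibleWeights : BddAbove (feasibleWeights E w t v) := by
  refine ⟨((∑ i, ∑ e ∈ E, w i e : ℕ) : WithBot ℕ), ?_⟩
  rintro _ ⟨P, hP, -, rfl⟩
  exact Nat.cast_le.mpr (sum_le_sum fun i _ => (hP i).1.listWeight_le (w i))

lemma FVal_le_of_forall {x : WithBot ℕ}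
    (h : ∀ P, IsFeasible E t v P → (familyWeight w P : WithBot ℕ) ≤ x) : FVal E w t v ≤ x :=
  csSup_le' (s := feasibleWeights E w t v) (by rintro _ ⟨P, hP, hd, rfl⟩; exact h P ⟨hP, hd⟩)

lemma le_FVal {P : Fin k → List V} (hP : IsFeasible E t v P) :
    (familyWeight w P : WithBot ℕ) ≤ FVal E w t v :=
  le_csSup (s := feasibleWeights E w t v) bddAbove_feasibleWeights ⟨P, hP.1, hP.2, rfl⟩

lemma FVal_eq_bot_or_exists :
    FVal E w t v = ⊥ ∨ ∃ P, IsFeasible E t v P ∧ FVal E w t v = familyWeight w P := by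
  rcases (feasibleWeights E w t v).eq_empty_or_nonempty with h | h
  · refine Or.inl ?_
    change sSup (feasibleWeights E w t v) = ⊥
    rw [h, csSup_empty]
  · obtain ⟨P, hP, hd, hc⟩ := h.csSup_mem bddAbove_feasibleWeights.finite
    exact Or.inr ⟨P, ⟨hP, hd⟩, hc⟩

lemma FVal_comp_cast {m n : ℕ} (h : m = n) (w : Fin n → V × V → ℕ) (v : Fin m → V) :
    FVal E w t (v ∘ Fin.cast h.symm) = FVal E (fun i => w (Fin.cast h i)) t v := by
  subst h
  rfl

end Families

section ConsFirst

variable {V : Type} {d m : ℕ}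

def consFirst (u : V) (Q : Fin (d + m) → List V) : Fin (d + m) → List V :=
  Fin.append (fun j => u :: Q (Fin.castAdd m j)) (fun j => Q (Fin.natAdd d j))

variable {u : V} {Q : Fin (d + m) → List V} {x : Fin d → V}

lemma familyWeight_consFirst (w : Fin (d + m) → V × V → ℕ)
    (hx : ∀ j, (Q (Fin.castAdd m j)).head? = some (x j)) :
    familyWeight w (consFirst u Q) = ∑ j, w (Fin.castAdd m j) (u, x j) + familyWeight w Q := by
  simp only [familyWeight, Fin.sum_univ_add, consFirst, Fin.append_left, Fin.append_right,
    listWeight_cons_of_head? _ (hx _), sum_add_distrib]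
  ring

lemma mem_pathEdges_consFirst (hx : ∀ j, (Q (Fin.castAdd m j)).head? = some (x j))
    {e : V × V} (i : Fin (d + m)) :
    e ∈ pathEdges (consFirst u Q i) ↔
      e ∈ pathEdges (Q i) ∨ ∃ j, i = Fin.castAdd m j ∧ e = (u, x j) := by
  induction i using Fin.addCases with
  | left i => simp [consFirst, pathEdges_cons_of_head? (hx i), or_comm]
  | right i =>
    simp only [consFirst, Fin.append_right, iff_self_or]
    rintro ⟨j, hij, -⟩
    have := congrArg Fin.val hij
    simp only [Fin.val_natAdd, Fin.val_castAdd] at this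
    omega

lemma EdgeDisjoint.of_consFirst (h : EdgeDisjoint (consFirst u Q))
    (hx : ∀ j, (Q (Fin.castAdd m j)).head? = some (x j)) : EdgeDisjoint Q := fun i j hij e hi hj =>
  h i j hij e ((mem_pathEdges_consFirst hx i).mpr (Or.inl hi))
    ((mem_pathEdges_consFirst hx j).mpr (Or.inl hj))

lemma EdgeDisjoint.injective_of_consFirst (h : EdgeDisjoint (consFirst u Q))
    (hx : ∀ j, (Q (Fin.castAdd m j)).head? = some (x j)) : Injective x := by
  intro i j hij
  by_contra hne
  refine h _ _ (fun h' => hne (Fin.castAdd_inj.mp h')) (u, x i)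
    ((mem_pathEdges_consFirst hx _).mpr (Or.inr ⟨i, rfl, rfl⟩))
    ((mem_pathEdges_consFirst hx _).mpr (Or.inr ⟨j, rfl, by rw [hij]⟩))

lemma EdgeDisjoint.consFirst (h : EdgeDisjoint Q)
    (hx : ∀ j, (Q (Fin.castAdd m j)).head? = some (x j)) (hxinj : Injective x)
    (hu : ∀ i, u ∉ Q i) : EdgeDisjoint (consFirst u Q) := by
  intro i j hij e hi hj
  rw [mem_pathEdges_consFirst hx] at hi hj
  rcases hi with hi | ⟨i, rfl, rfl⟩ <;> rcases hj with hj | ⟨j, rfl, he⟩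
  · exact h _ _ hij e hi hj
  · exact hu _ (by simpa [he] using fst_mem_of_mem_pathEdges hi)
  · exact hu _ (fst_mem_of_mem_pathEdges hj)
  · exact hij (by rw [hxinj (congrArg Prod.snd he)])

variable [DecidableEq V] {E : Finset (V × V)} {t : V} {vtail : Fin m → V}

lemma IsFeasible.head?_castAdd (hQ : IsFeasible E t (Fin.append x vtail) Q) (j : Fin d) :
    (Q (Fin.castAdd m j)).head? = some (x j) := by
  simpa using (hQ.1 (Fin.castAdd m j)).2.1

lemma IsFeasible.consFirst (hQ : IsFeasible E t (Fin.append x vtail) Q) (hxinj : Injective x)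
    (hxE : ∀ j, (u, x j) ∈ E) (hu : ∀ i, u ∉ Q i) :
    IsFeasible E t (Fin.append (fun _ => u) vtail) (consFirst u Q) := by
  refine ⟨fun i => ?_, hQ.2.consFirst hQ.head?_castAdd hxinj hu⟩
  induction i using Fin.addCases with
  | left j =>
    simpa [_root_.consFirst] using (hQ.1 (Fin.castAdd m j)).cons (by simpa using hxE j) (hu _)
  | right j => simpa [_root_.consFirst] using hQ.1 (Fin.natAdd d j)

lemma IsFeasible.exists_eq_consFirst {P : Fin (d + m) → List V} {a : Fin d → V}
    (hP : IsFeasible E t (Fin.append (fun _ => u) vtail) P) (hut : u ≠ t) (ha : Injective a)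
    (haE : ∀ j, (u, a j) ∈ E) (hdeg : outdeg E u = d) :
    ∃ (π : Equiv.Perm (Fin d)) (Q : Fin (d + m) → List V),
      IsFeasible E t (Fin.append (fun j => a (π j)) vtail) Q ∧ P = _root_.consFirst u Q := by
  have hsplit : ∀ j, ∃ i r, P (Fin.castAdd m j) = u :: r ∧ IsPathFrom E r (a i) t := by
    intro j
    have hPj : IsPathFrom E (P (Fin.castAdd m j)) u t := by simpa using hP.1 (Fin.castAdd m j)
    obtain ⟨x, r, hr, hux, hrx⟩ := hPj.exists_eq_cons hut
    obtain ⟨i, rfl⟩ := exists_eq_of_outdeg_eq ha haE hdeg hux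
    exact ⟨i, r, hr, hrx⟩
  choose f r hPr hr using hsplit
  set Q := Fin.append r fun j => P (Fin.natAdd d j)
  have hPQ : P = _root_.consFirst u Q := by
    funext i
    induction i using Fin.addCases <;> simp [Q, _root_.consFirst, hPr]
  have hQhead : ∀ j, (Q (Fin.castAdd m j)).head? = some (a (f j)) := fun j => by
    simpa [Q] using (hr j).2.1
  have hf : Injective f := ((hPQ ▸ hP.2).injective_of_consFirst hQhead).of_comp
  refine ⟨Equiv.ofBijective f (Finite.injective_iff_bijective.mp hf), Q,
    ⟨fun i => ?_, (hPQ ▸ hP.2).of_consFirst hQhead⟩, hPQ⟩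
  induction i using Fin.addCases with
  | left j => simpa [Q] using hr j
  | right j => simpa [Q] using hP.1 (Fin.natAdd d j)

end ConsFirst

theorem FVal_append_const_eq_sup {V : Type} [DecidableEq V] {E : Finset (V × V)} (hE : Acyclic E)
    {t u : V} (hut : u ≠ t) {d m : ℕ} {a : Fin d → V} (ha : Injective a)
    (haE : ∀ j, (u, a j) ∈ E) (hdeg : outdeg E u = d) {vtail : Fin m → V}
    (hreach : ∀ j, ¬ ∃ p, IsPathFrom E p (vtail j) u) (w : Fin (d + m) → V × V → ℕ) :
    FVal E w t (Fin.append (fun _ => u) vtail) = univ.sup fun π : Equiv.Perm (Fin d) =>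
      ((∑ j, w (Fin.castAdd m j) (u, a (π j)) : ℕ) : WithBot ℕ) +
        FVal E w t (Fin.append (fun j => a (π j)) vtail) := by
  apply le_antisymm
  · refine FVal_le_of_forall fun P hP => ?_
    obtain ⟨π, Q, hQ, rfl⟩ := hP.exists_eq_consFirst hut ha haE hdeg
    rw [familyWeight_consFirst w hQ.head?_castAdd, Nat.cast_add]
    exact le_sup_of_le (mem_univ π) (add_le_add le_rfl (le_FVal hQ))
  · refine Finset.sup_le fun π _ => ?_
    obtain h | ⟨Q, hQ, hQw⟩ := FVal_eq_bot_or_exists (E := E) (t := t) (w := w)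
      (v := Fin.append (fun j => a (π j)) vtail)
    · rw [h, WithBot.add_bot]
      exact bot_le
    have hu : ∀ i, u ∉ Q i := by
      intro i
      induction i using Fin.addCases with
      | left j => exact hE.notMem_of_isPathFrom (haE (π j)) (by simpa using hQ.1 (Fin.castAdd m j))
      | right j =>
        have hQj : IsPathFrom E (Q (Fin.natAdd d j)) (vtail j) t := by
          simpa using hQ.1 (Fin.natAdd d j)
        exact fun hu => hreach j (hQj.exists_prefix hu)
    rw [hQw, ← Nat.cast_add, ← familyWeight_consFirst w hQ.head?_castAdd]
    exact le_FVal (hQ.consFirst (ha.comp π.injective) (fun j => haE (π j)) hu)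

theorem stmt15_general {V : Type} [DecidableEq V] (E : Finset (V × V)) (k : ℕ)
    (hacyc : Acyclic E) (t : V) (w : Fin k → V × V → ℕ)
    (u : V) (hut : u ≠ t) (d : ℕ) (hdk : d ≤ k)
    (hdeg : outdeg E u = d)
    (a : Fin d → V) (ha : Function.Injective a) (haE : ∀ j, (u, a j) ∈ E)
    (vtail : Fin (k - d) → V)
    (hreach : ∀ j, ¬ ∃ p : List V, IsPathFrom E p (vtail j) u) :
    FVal E w t (Fin.append (fun _ : Fin d => u) vtail ∘
        Fin.cast (Nat.add_sub_cancel' hdk).symm) =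
      (Finset.univ : Finset (Equiv.Perm (Fin d))).sup (fun π =>
        ((∑ j : Fin d, w (Fin.castLE hdk j) (u, a (π j)) : ℕ) : WithBot ℕ) +
        FVal E w t (Fin.append (fun j : Fin d => a (π j)) vtail ∘
          Fin.cast (Nat.add_sub_cancel' hdk).symm)) := by
  simp only [FVal_comp_cast (Nat.add_sub_cancel' hdk)]
  exact FVal_append_const_eq_sup hacyc hut ha haE hdeg hreach _

/-- Let `G` be a finite DAG with a distinguished vertex `t` and
nonnegative integer weights `w i e` for `1 ≤ i ≤ k`. Let `u ≠ t` be a vertex of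
outdegree `d ≥ 1` with out-edges `(u, a 1), …, (u, a d)`, and let
`vtail = (v_{d+1}, …, v_k)` be vertices from none of which `u` is reachable by a
directed path. Then `F(u, …, u, v_{d+1}, …, v_k)` (with `u` repeated `d` times) equals
the maximum over all permutations `π` of `{1, …, d}` of
`Σ_{j=1}^d w^j_{(u, a (π j))} + F(a (π 1), …, a (π d), v_{d+1}, …, v_k)`. -/
theorem stmt15 {V : Type} [Fintype V] [DecidableEq V] (E : Finset (V × V)) (k : ℕ)
    (hacyc : Acyclic E) (t : V) (w : Fin k → V × V → ℕ)
    (u : V) (hut : u ≠ t) (d : ℕ) (hd1 : 1 ≤ d) (hdk : d ≤ k)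
    (hdeg : outdeg E u = d)
    (a : Fin d → V) (ha : Function.Injective a) (haE : ∀ j, (u, a j) ∈ E)
    (vtail : Fin (k - d) → V)
    (hreach : ∀ j, ¬ ∃ p : List V, IsPathFrom E p (vtail j) u) :
    FVal E w t (Fin.append (fun _ : Fin d => u) vtail ∘
        Fin.cast (Nat.add_sub_cancel' hdk).symm) =
      (Finset.univ : Finset (Equiv.Perm (Fin d))).sup (fun π =>
        ((∑ j : Fin d, w (Fin.castLE hdk j) (u, a (π j)) : ℕ) : WithBot ℕ) +
        FVal E w t (Fin.append (fun j : Fin d => a (π j)) vtail ∘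
          Fin.cast (Nat.add_sub_cancel' hdk).symm)) :=
  stmt15_general E k hacyc t w u hut d hdk hdeg a ha haE vtail hreach
end
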